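/- Let G be the simple graph on vertex set {A_1,A_2,A_3, B_1,B_2,B_3, C_1,C_2,C_3} whose edge set consists exactly of the 18 edges {A_i, B_j} and {A_i, C_j} for i, j ∈ {1,2,3}. Assign to each edge {A_i,B_j} the coefficient given by the term ⟨A_iB_j⟩ in I_AB = ⟨A_1B_1⟩ − ⟨A_1B_2⟩ − ⟨A_1B_3⟩ + ⟨A_2B_1⟩ + ⟨A_2B_2⟩ − ⟨A_2B_3⟩ + ⟨A_3B_1⟩ + ⟨A_3B_2⟩ + ⟨A_3B_3⟩, and analogously for edges {A_i,C_j} from I_AC (same coefficients with B replaced by C). Then for every partition of the 18 edges into sets F_1,…,F_r such that for each j the subgraph of G induced on the set of endpoints of the edges in F_j is chordal, the sum over j of the maxima, over assignments a : V(G) → {−1,+1}, of the subexpression Σ_{{u,v}∈F_j} β({u,v}) a(u)a(v) (with β the assigned coefficients) is strictly greater than 10. -/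

import Mathlib

/-- The two-element set of outcomes `{−1, +1}` (as a subtype of `ℤ`). -/
abbrev Sgn : Type := ({-1, 1} : Finset ℤ)

instance : Nonempty Sgn := ⟨⟨1, by decide⟩⟩

/-- A finite simple graph is *chordal* if every cycle of length at least 4 has a
chord, i.e. an edge of the graph joining two vertices of the cycle that are not
consecutive on the cycle. -/
def SimpleGraph.IsChordal {W : Type*} (G : SimpleGraph W) : Prop :=
  ∀ (v : W) (c : G.Walk v v), c.IsCycle → 4 ≤ c.length →
    ∃ u w : W, u ∈ c.support ∧ w ∈ c.support ∧ G.Adj u w ∧ ¬ c.toSubgraph.Adj u w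

/-- The nine observables `A₁,A₂,A₃,B₁,B₂,B₃,C₁,C₂,C₃` (indexed from `0`). -/
inductive Obs : Type
  | A (i : Fin 3)
  | B (j : Fin 3)
  | C (j : Fin 3)
  deriving DecidableEq, Fintype

open Obs in
/-- Base relation for the commutation graph: exactly the 18 edges `A_i ∼ B_j` and
`A_i ∼ C_j`. -/
def baseRel : Obs → Obs → Bool
  | A _, B _ => true
  | A _, C _ => true
  | _, _ => false

/-- The commutation graph of the two three-setting XOR games `I_AB` and `I_AC`. -/
def G18 : SimpleGraph Obs := SimpleGraph.fromRel (fun u v => baseRel u v = true)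

instance : DecidableRel G18.Adj := fun u v =>
  decidable_of_iff _ (SimpleGraph.fromRel_adj (fun u v => baseRel u v = true) u v).symm

/-- The XOR-game coefficients: the matrix of signs of `⟨A_iB_j⟩` in
`I_AB = ⟨A₁B₁⟩ − ⟨A₁B₂⟩ − ⟨A₁B₃⟩ + ⟨A₂B₁⟩ + ⟨A₂B₂⟩ − ⟨A₂B₃⟩ + ⟨A₃B₁⟩ + ⟨A₃B₂⟩ + ⟨A₃B₃⟩`. -/
def coeff (i j : Fin 3) : ℝ :=
  if i = 0 ∧ j ≠ 0 then -1 else if i = 1 ∧ j = 2 then -1 else 1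

open Obs in
/-- Auxiliary one-sided coefficient function on ordered pairs of observables. -/
def coeffAux : Obs → Obs → ℝ
  | A i, B j => coeff i j
  | A i, C j => coeff i j
  | _, _ => 0

/-- The edge coefficients `β`: the coefficient of `⟨A_iB_j⟩` in `I_AB` on the edge
`{A_i, B_j}`, and the coefficient of `⟨A_iC_j⟩` in `I_AC` on the edge `{A_i, C_j}`. -/
def β : Sym2 Obs → ℝ :=
  Sym2.lift ⟨fun u v => coeffAux u v + coeffAux v u, fun u v => add_comm _ _⟩

/-- The value `a(u)a(v)` of an assignment on an unordered pair `{u, v}`. -/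
def edgeTerm (a : Obs → Sgn) : Sym2 Obs → ℤ :=
  Sym2.lift ⟨fun u v => (a u : ℤ) * (a v : ℤ), fun u v => mul_comm _ _⟩

/-- The set of endpoints of a set of edges. -/
def endpoints (F : Finset (Sym2 Obs)) : Finset Obs :=
  Finset.univ.filter (fun v => ∃ e ∈ F, v ∈ e)

/-!
`G18` is the complete bipartite graph between `{A₁, A₂, A₃}` and `{B₁, …, C₃}`. Two edges
`A_i x`, `A_k y` with `i ≠ k` and `x ≠ y` span a chordless induced 4-cycle `A_i x A_k y`, so
every part whose induced subgraph is chordal is a star. On a star all terms can be made `+1`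
at once (the centre gets `+1`, each leaf the sign of its coefficient), so the classical maximum
of each part is its number of edges, and the maxima add up to at least `18 > 10`.
-/

namespace SimpleGraph

variable {V : Type*} {G : SimpleGraph V}

theorem IsChordal.adj_or_adj_of_square (hG : G.IsChordal) {a b c d : V}
    (hab : G.Adj a b) (hbc : G.Adj b c) (hcd : G.Adj c d) (hda : G.Adj d a)
    (hac : a ≠ c) (hbd : b ≠ d) : G.Adj a c ∨ G.Adj b d := by
  let q : G.Walk a a := .cons hab (.cons hbc (.cons hcd (.cons hda .nil)))
  have hq : q.IsCycle := by
    simp [q, Walk.cons_isCycle_iff, hab.ne, hbc.ne, hcd.ne, hda.ne, hac, hbd, hab.ne.symm,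
      hda.ne.symm, hac.symm]
  obtain ⟨u, w, hu, hw, huw, hchord⟩ := hG a q hq (by simp [q])
  simp only [q, Walk.support_cons, Walk.support_nil, List.mem_cons, List.not_mem_nil,
    or_false] at hu hw
  simp only [q, Walk.toSubgraph, singletonSubgraph_le_iff, subgraphOfAdj_verts,
    Set.mem_insert_iff, Set.mem_singleton_iff, or_true, sup_of_le_left, Subgraph.sup_adj,
    subgraphOfAdj_adj, Sym2.eq, Sym2.rel_iff', Prod.mk.injEq, Prod.swap_prod_mk, not_or,
    not_and] at hchord
  rcases hu with rfl | rfl | rfl | rfl | rfl <;> rcases hw with rfl | rfl | rfl | rfl | rfl <;>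
    simp_all [G.adj_comm]

section Bipartite

variable {side : V → Bool}

theorem exists_eq_mk_of_mem_edgeSet_of_adj_iff (hG : ∀ u v, G.Adj u v ↔ side u ≠ side v)
    {e : Sym2 V} (he : e ∈ G.edgeSet) : ∃ u w, side u = true ∧ side w = false ∧ e = s(u, w) := by
  induction e using Sym2.ind with
  | _ p q =>
    have hpq := (hG p q).mp he
    cases hp : side p
    · exact ⟨q, p, by simpa [hp] using hpq, hp, Sym2.eq_swap⟩
    · exact ⟨p, q, hp, by simpa [hp] using hpq.symm, rfl⟩

theorem eq_or_eq_of_isChordal_induce_of_adj_iff (hG : ∀ u v, G.Adj u v ↔ side u ≠ side v)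
    {s : Set V} (hch : (G.induce s).IsChordal)
    {a b x y : V} (has : a ∈ s) (hbs : b ∈ s) (hxs : x ∈ s) (hys : y ∈ s)
    (ha : side a = true) (hb : side b = true) (hx : side x = false) (hy : side y = false) :
    a = b ∨ x = y := by
  by_contra! h
  have adj : ∀ {u w : s}, side u ≠ side w → (G.induce s).Adj u w := (hG _ _).mpr
  have hchord := hch.adj_or_adj_of_square (a := ⟨a, has⟩) (b := ⟨x, hxs⟩) (c := ⟨b, hbs⟩)
    (d := ⟨y, hys⟩) (adj (by simp [ha, hx])) (adj (by simp [hx, hb])) (adj (by simp [hb, hy]))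
    (adj (by simp [hy, ha])) (by simpa using h.1) (by simpa using h.2)
  simp [hG, ha, hb, hx, hy] at hchord

theorem exists_mem_forall_of_isChordal_induce_of_adj_iff [Nonempty V]
    (hG : ∀ u v, G.Adj u v ↔ side u ≠ side v) {s : Set V} (hch : (G.induce s).IsChordal)
    {S : Set (Sym2 V)} (hSG : S ⊆ G.edgeSet) (hSs : ∀ e ∈ S, ∀ v ∈ e, v ∈ s) :
    ∃ v, ∀ e ∈ S, v ∈ e := by
  have orient := fun {e} (he : e ∈ S) => exists_eq_mk_of_mem_edgeSet_of_adj_iff hG (hSG he)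
  have share : ∀ {a b x y}, s(a, x) ∈ S → s(b, y) ∈ S → side a = true → side b = true →
      side x = false → side y = false → a = b ∨ x = y := fun hax hby =>
    eq_or_eq_of_isChordal_induce_of_adj_iff hG hch (hSs _ hax _ (by simp)) (hSs _ hby _ (by simp))
      (hSs _ hax _ (by simp)) (hSs _ hby _ (by simp))
  rcases S.eq_empty_or_nonempty with rfl | ⟨e₀, he₀⟩
  · simp
  obtain ⟨a, x, ha, hx, rfl⟩ := orient he₀
  by_cases hstar : ∀ e ∈ S, a ∈ e
  · exact ⟨a, hstar⟩
  push Not at hstar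
  obtain ⟨e₁, he₁, hae₁⟩ := hstar
  obtain ⟨b, y, hb, hy, rfl⟩ := orient he₁
  have hab : a ≠ b := by rintro rfl; simp at hae₁
  obtain rfl : x = y := (share he₀ he₁ ha hb hx hy).resolve_left hab
  refine ⟨x, fun e he => ?_⟩
  obtain ⟨c, z, hc, hz, rfl⟩ := orient he
  rcases eq_or_ne z x with rfl | hzx
  · simp
  obtain rfl := (share he he₀ hc ha hz hx).resolve_right hzx
  exact absurd ((share he he₁ hc hb hz hx).resolve_right hzx) hab

end Bipartite

end SimpleGraph

namespace Obs

def isA : Obs → Bool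
  | A _ => true
  | _ => false

instance : Nonempty Obs := ⟨A 0⟩

end Obs

open Obs

theorem G18_adj_iff (u v : Obs) : G18.Adj u v ↔ u.isA ≠ v.isA := by
  cases u <;> cases v <;> simp [G18, baseRel, isA]

theorem card_edgeFinset_G18 : G18.edgeFinset.card = 18 := by decide

theorem coeff_eq_one_or_neg_one (i j : Fin 3) : coeff i j = 1 ∨ coeff i j = -1 := by
  unfold coeff; split_ifs <;> simp

theorem β_eq_one_or_neg_one {e : Sym2 Obs} (he : e ∈ G18.edgeSet) : β e = 1 ∨ β e = -1 := by
  induction e using Sym2.ind with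
  | _ u v =>
    cases u <;> cases v <;> simp_all [G18, baseRel, β, coeffAux, coeff_eq_one_or_neg_one]

noncomputable def starSigns (b : Sym2 Obs → ℝ) (v : Obs) : Obs → Sgn := fun u =>
  if u ≠ v ∧ b s(v, u) = -1 then ⟨-1, by decide⟩ else ⟨1, by decide⟩

theorem mul_edgeTerm_starSigns {b : Sym2 Obs → ℝ} {v u : Obs} (huv : u ≠ v)
    (hb : b s(v, u) = 1 ∨ b s(v, u) = -1) :
    b s(v, u) * ((edgeTerm (starSigns b v) s(v, u) : ℤ) : ℝ) = 1 := by
  rcases hb with hb | hb <;> norm_num [edgeTerm, starSigns, huv, hb]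

theorem sum_mul_edgeTerm_starSigns {b : Sym2 Obs → ℝ} {v : Obs} {S : Finset (Sym2 Obs)}
    (hS : ∀ e ∈ S, v ∈ e ∧ ¬ e.IsDiag) (hb : ∀ e ∈ S, b e = 1 ∨ b e = -1) :
    ∑ e ∈ S, b e * ((edgeTerm (starSigns b v) e : ℤ) : ℝ) = S.card := by
  rw [Finset.card_eq_sum_ones, Nat.cast_sum, Nat.cast_one]
  refine Finset.sum_congr rfl fun e he => ?_
  obtain ⟨hve, hdiag⟩ := hS e he
  have hbe := hb e he
  rw [← Sym2.other_spec hve] at hbe ⊢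
  exact mul_edgeTerm_starSigns (Sym2.other_ne hdiag hve) hbe

theorem card_le_sup'_of_isChordal {S : Finset (Sym2 Obs)} (hS : S ⊆ G18.edgeFinset)
    (hch : (G18.induce ((endpoints S : Finset Obs) : Set Obs)).IsChordal) :
    (S.card : ℝ) ≤ Finset.univ.sup' Finset.univ_nonempty
      (fun a : Obs → Sgn => ∑ e ∈ S, β e * ((edgeTerm a e : ℤ) : ℝ)) := by
  have hSG : ∀ e ∈ S, e ∈ G18.edgeSet := fun e he => SimpleGraph.mem_edgeFinset.mp (hS he)
  obtain ⟨v, hv⟩ := SimpleGraph.exists_mem_forall_of_isChordal_induce_of_adj_iff G18_adj_iff hch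
    (S := S) hSG fun e he u hu => by simpa [endpoints] using ⟨e, he, hu⟩
  rw [← sum_mul_edgeTerm_starSigns
    (fun e he => ⟨hv e he, G18.not_isDiag_of_mem_edgeSet (hSG e he)⟩)
    fun e he => β_eq_one_or_neg_one (hSG e he)]
  exact Finset.le_sup' (fun a : Obs → Sgn => ∑ e ∈ S, β e * ((edgeTerm a e : ℤ) : ℝ))
    (Finset.mem_univ _)

theorem no_chordal_decomposition_for_xor_monogamy_general
    (r : ℕ) (F : Fin r → Finset (Sym2 Obs))
    (hsub : ∀ j, F j ⊆ G18.edgeFinset)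
    (hcover : ∀ e ∈ G18.edgeFinset, ∃ j, e ∈ F j)
    (hchordal : ∀ j, (G18.induce ((endpoints (F j) : Finset Obs) : Set Obs)).IsChordal) :
    10 < ∑ j, Finset.univ.sup' Finset.univ_nonempty
      (fun a : Obs → Sgn => ∑ e ∈ F j, β e * ((edgeTerm a e : ℤ) : ℝ)) := by
  have hcover' : G18.edgeFinset ⊆ Finset.univ.biUnion F := fun e he => by
    simpa using hcover e he
  calc (10 : ℝ) < G18.edgeFinset.card := by rw [card_edgeFinset_G18]; norm_num
    _ ≤ ∑ j, ((F j).card : ℝ) := by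
      exact_mod_cast (Finset.card_le_card hcover').trans Finset.card_biUnion_le
    _ ≤ _ := Finset.sum_le_sum fun j _ => card_le_sup'_of_isChordal (hsub j) (hchordal j)

/-- For *every* partition `F 0, …, F (r−1)` of the 18 edges of the
commutation graph `G18` such that each induced subgraph on the endpoints of `F j`
is chordal, the sum over `j` of the classical maxima of the subexpressions
`Σ_{{u,v}∈F j} β({u,v}) a(u)a(v)` is strictly greater than `10`: the tight
no-signaling monogamy `I_AB + I_AC ≤ 10` does not arise from any chordal
decomposition. -/
theorem no_chordal_decomposition_for_xor_monogamy
    (r : ℕ) (F : Fin r → Finset (Sym2 Obs))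
    (hsub : ∀ j, F j ⊆ G18.edgeFinset)
    (hdisj : ∀ j k, j ≠ k → Disjoint (F j) (F k))
    (hcover : ∀ e ∈ G18.edgeFinset, ∃ j, e ∈ F j)
    (hchordal : ∀ j, (G18.induce ((endpoints (F j) : Finset Obs) : Set Obs)).IsChordal) :
    10 < ∑ j, Finset.univ.sup' Finset.univ_nonempty
      (fun a : Obs → Sgn => ∑ e ∈ F j, β e * ((edgeTerm a e : ℤ) : ℝ)) :=
  no_chordal_decomposition_for_xor_monogamy_general r F hsub hcover hchordal
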